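/- Suppose g : ℝ → ℝ is a function such that the bivariate function Dg(x,y) = g(x+y) − g(x) − g(y) is locally Lipschitz on ℝ², i.e., for every compact set Ω ⊂ ℝ² there is a constant K ≥ 0 such that |Dg(p) − Dg(q)| ≤ K·|p − q| for all p, q ∈ Ω. Then there exist a locally Lipschitz function f : ℝ → ℝ (for every compact Ω ⊂ ℝ there is K ≥ 0 with |f(x) − f(y)| ≤ K·|x − y| for all x, y ∈ Ω) and an additive function A : ℝ → ℝ (A(x+y) = A(x) + A(y) for all x, y ∈ ℝ) such that g = f + A. -/

import Mathlib

/-!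
`D = Dg` is a continuous 2-cocycle, and every continuous 2-cocycle has the explicit primitive
`f x = ∫₀ˣ D(t, 1) dt - ∫₀¹ D(x, u) du`, i.e. `Df = D`: integrating the cocycle identity in its
last variable over a unit interval turns it into a telescoping identity between integrals.
The first term of `f` is `C¹` and the second is locally Lipschitz because `D` is, so `f` is
locally Lipschitz, while `A = g - f` satisfies `DA = Dg - Df = 0`, i.e. `A` is additive.
-/

open intervalIntegral

theorem LocallyLipschitz.of_euclidean_lipschitz_on_compacts {D : ℝ × ℝ → ℝ}
    (h : ∀ Ω : Set (ℝ × ℝ), IsCompact Ω → ∃ K : ℝ, 0 ≤ K ∧ ∀ p ∈ Ω, ∀ q ∈ Ω,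
      |D p - D q| ≤ K * √((p.1 - q.1) ^ 2 + (p.2 - q.2) ^ 2)) :
    LocallyLipschitz D := by
  have hsqrt (p q : ℝ × ℝ) : √((p.1 - q.1) ^ 2 + (p.2 - q.2) ^ 2) ≤ 2 * dist p q := by
    have h₁ : |p.1 - q.1| ≤ dist p q := by
      rw [Prod.dist_eq, ← Real.dist_eq]; exact le_max_left _ _
    have h₂ : |p.2 - q.2| ≤ dist p q := by
      rw [Prod.dist_eq, ← Real.dist_eq]; exact le_max_right _ _
    rw [Real.sqrt_le_iff]
    refine ⟨by positivity, ?_⟩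
    nlinarith [sq_abs (p.1 - q.1), sq_abs (p.2 - q.2), abs_nonneg (p.1 - q.1),
      abs_nonneg (p.2 - q.2)]
  intro p₀
  obtain ⟨K, hK₀, hK⟩ := h _ (isCompact_closedBall p₀ 1)
  refine ⟨⟨2 * K, by positivity⟩, _, Metric.closedBall_mem_nhds p₀ one_pos,
    LipschitzOnWith.of_dist_le_mul fun p hp q hq => ?_⟩
  calc dist (D p) (D q) ≤ K * √((p.1 - q.1) ^ 2 + (p.2 - q.2) ^ 2) := hK p hp q hq
    _ ≤ K * (2 * dist p q) := by gcongr; exact hsqrt p q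
    _ = 2 * K * dist p q := by ring

section DoubleDifference

variable {G E : Type*}

def doubleDiff [Add G] [Sub E] (g : G → E) (p : G × G) : E := g (p.1 + p.2) - g p.1 - g p.2

def IsTwoCocycle [Add G] [Add E] (D : G × G → E) : Prop :=
  ∀ x y z, D (x, y) + D (x + y, z) = D (x, y + z) + D (y, z)

theorem isTwoCocycle_doubleDiff [AddSemigroup G] [AddCommGroup E] (g : G → E) :
    IsTwoCocycle (doubleDiff g) := fun x y z => by
  simp only [doubleDiff, add_assoc]
  abel

theorem doubleDiff_sub [Add G] [AddCommGroup E] (f g : G → E) :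
    doubleDiff (f - g) = doubleDiff f - doubleDiff g := by
  ext p
  simp only [doubleDiff, Pi.sub_apply]
  abel

end DoubleDifference

section Primitive

variable {E : Type*} [NormedAddCommGroup E] [NormedSpace ℝ E]

theorem Continuous.locallyLipschitz_integral_right [CompleteSpace E] {f : ℝ → E}
    (hf : Continuous f) (a : ℝ) : LocallyLipschitz fun x => ∫ t in a..x, f t :=
  ContDiff.locallyLipschitz <| contDiff_one_iff_deriv.2
    ⟨fun x => (hf.integral_hasStrictDerivAt a x).hasDerivAt.differentiableAt,
      by rwa [funext (Continuous.deriv_integral _ hf a)]⟩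

theorem LocallyLipschitz.parametric_intervalIntegral {D : ℝ × ℝ → E} (hD : LocallyLipschitz D)
    (a b : ℝ) : LocallyLipschitz fun x => ∫ u in a..b, D (x, u) := by
  intro x₀
  obtain ⟨K, hK⟩ := hD.locallyLipschitzOn.exists_lipschitzOnWith_of_compact
    ((isCompact_closedBall x₀ 1).prod (isCompact_uIcc (a := a) (b := b)))
  refine ⟨K * ‖b - a‖₊, Metric.closedBall x₀ 1, Metric.closedBall_mem_nhds x₀ one_pos,
    LipschitzOnWith.of_dist_le_mul fun x hx y hy => ?_⟩
  have hslice : ∀ u ∈ Set.uIoc a b, ‖D (x, u) - D (y, u)‖ ≤ K * dist x y := fun u hu => by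
    have hu' : u ∈ Set.uIcc a b := Set.uIoc_subset_uIcc hu
    simpa only [← dist_eq_norm, dist_prod_same_right] using
      hK.dist_le_mul (x, u) ⟨hx, hu'⟩ (y, u) ⟨hy, hu'⟩
  have hcont : ∀ z, Continuous fun u => D (z, u) := fun z => by
    have := hD.continuous; fun_prop
  rw [dist_eq_norm, ← integral_sub ((hcont x).intervalIntegrable a b)
    ((hcont y).intervalIntegrable a b)]
  calc ‖∫ u in a..b, D (x, u) - D (y, u)‖ ≤ K * dist x y * |b - a| :=
        norm_integral_le_of_norm_le_const hslice
    _ = ↑(K * ‖b - a‖₊) * dist x y := by push_cast; rw [Real.norm_eq_abs]; ring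

noncomputable def cocyclePrimitive (D : ℝ × ℝ → E) (x : ℝ) : E :=
  (∫ t in 0..x, D (t, 1)) - ∫ u in 0..1, D (x, u)

variable {D : ℝ × ℝ → E}

theorem IsTwoCocycle.doubleDiff_integral_diag (hcoc : IsTwoCocycle D) (hD : Continuous D)
    (x y : ℝ) :
    doubleDiff (fun x => ∫ t in 0..x, D (t, 1)) (x, y) =
      (∫ u in y..y + 1, D (x, u)) - ∫ u in 0..1, D (x, u) := by
  have integrable {h : ℝ → E} (hh : Continuous h) (a b : ℝ) :
      IntervalIntegrable h MeasureTheory.volume a b :=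
    hh.intervalIntegrable a b
  have hshift : (∫ t in x..x + y, D (t, 1)) = ∫ t in 0..y, D (x + t, 1) := by
    simpa using (integral_comp_add_left (a := 0) (b := y) (fun t => D (t, 1)) x).symm
  calc doubleDiff (fun x => ∫ t in 0..x, D (t, 1)) (x, y)
      = (∫ t in 0..y, D (x + t, 1)) - ∫ t in 0..y, D (t, 1) := by
        rw [doubleDiff, integral_interval_sub_left (integrable (by fun_prop) _ _)
          (integrable (by fun_prop) _ _), hshift]
    _ = ∫ t in 0..y, D (x, t + 1) - D (x, t) := by
        rw [← integral_sub (integrable (by fun_prop) _ _) (integrable (by fun_prop) _ _)]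
        exact integral_congr fun t _ =>
          sub_eq_sub_iff_add_eq_add.2 (by rw [add_comm]; exact hcoc x t 1)
    _ = (∫ u in 1..y + 1, D (x, u)) - ∫ u in 0..y, D (x, u) := by
        rw [integral_sub (integrable (by fun_prop) _ _) (integrable (by fun_prop) _ _)]
        simpa using integral_comp_add_right (a := 0) (b := y) (fun u => D (x, u)) 1
    _ = (∫ u in y..y + 1, D (x, u)) - ∫ u in 0..1, D (x, u) := by
        rw [integral_interval_sub_interval_comm (integrable (by fun_prop) _ _)
          (integrable (by fun_prop) _ _) (integrable (by fun_prop) _ _),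
          integral_symm 1 0, integral_symm (y + 1) y]
        abel

theorem IsTwoCocycle.doubleDiff_integral_slice [CompleteSpace E] (hcoc : IsTwoCocycle D)
    (hD : Continuous D) (x y : ℝ) :
    doubleDiff (fun x => ∫ u in 0..1, D (x, u)) (x, y) =
      (∫ u in y..y + 1, D (x, u)) - (∫ u in 0..1, D (x, u)) - D (x, y) := by
  have integrable {h : ℝ → E} (hh : Continuous h) (a b : ℝ) :
      IntervalIntegrable h MeasureTheory.volume a b :=
    hh.intervalIntegrable a b
  have hslice : (∫ u in 0..1, D (x + y, u)) =
      (∫ u in y..y + 1, D (x, u)) + (∫ u in 0..1, D (y, u)) - D (x, y) :=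
    calc (∫ u in 0..1, D (x + y, u)) = ∫ u in 0..1, D (x, y + u) + D (y, u) - D (x, y) :=
          integral_congr fun u _ => eq_sub_of_add_eq' (hcoc x y u)
      _ = (∫ u in y..y + 1, D (x, u)) + (∫ u in 0..1, D (y, u)) - D (x, y) := by
          rw [integral_sub (integrable (by fun_prop) _ _) intervalIntegrable_const,
            integral_add (integrable (by fun_prop) _ _) (integrable (by fun_prop) _ _),
            integral_const, integral_comp_add_left (fun u => D (x, u)) y]
          simp
  rw [doubleDiff, hslice]
  abel

theorem IsTwoCocycle.doubleDiff_cocyclePrimitive [CompleteSpace E] (hcoc : IsTwoCocycle D)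
    (hD : Continuous D) : doubleDiff (cocyclePrimitive D) = D := by
  ext ⟨x, y⟩
  change doubleDiff ((fun x => ∫ t in 0..x, D (t, 1)) - fun x => ∫ u in 0..1, D (x, u)) (x, y) = _
  rw [doubleDiff_sub, Pi.sub_apply, hcoc.doubleDiff_integral_diag hD,
    hcoc.doubleDiff_integral_slice hD]
  abel

theorem LocallyLipschitz.cocyclePrimitive [CompleteSpace E] (hD : LocallyLipschitz D) :
    LocallyLipschitz (cocyclePrimitive D) :=
  ((hD.continuous.comp (by fun_prop : Continuous fun t : ℝ => (t, (1 : ℝ))))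
    |>.locallyLipschitz_integral_right 0).sub (hD.parametric_intervalIntegral 0 1)

end Primitive

/-- If the double difference `Dg(x,y) = g(x+y) - g(x) - g(y)` is locally
Lipschitz on `ℝ²` (Euclidean norm), then `g = f + A` with `f` locally
Lipschitz and `A` additive. -/
theorem stmt_11 (g : ℝ → ℝ)
    (hg : ∀ Ω : Set (ℝ × ℝ), IsCompact Ω → ∃ K : ℝ, 0 ≤ K ∧ ∀ p ∈ Ω, ∀ q ∈ Ω,
      |(g (p.1 + p.2) - g p.1 - g p.2) - (g (q.1 + q.2) - g q.1 - g q.2)|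
        ≤ K * Real.sqrt ((p.1 - q.1) ^ 2 + (p.2 - q.2) ^ 2)) :
    ∃ f A : ℝ → ℝ,
      (∀ Ω : Set ℝ, IsCompact Ω → ∃ K : ℝ, 0 ≤ K ∧ ∀ x ∈ Ω, ∀ y ∈ Ω,
        |f x - f y| ≤ K * |x - y|) ∧
      (∀ x y : ℝ, A (x + y) = A x + A y) ∧
      g = f + A := by
  have hD : LocallyLipschitz (doubleDiff g) := .of_euclidean_lipschitz_on_compacts hg
  set f := cocyclePrimitive (doubleDiff g)
  have hA : doubleDiff (g - f) = 0 := by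
    rw [doubleDiff_sub, (isTwoCocycle_doubleDiff g).doubleDiff_cocyclePrimitive hD.continuous,
      sub_self]
  refine ⟨f, g - f, fun Ω hΩ => ?_, fun x y => ?_, (add_sub_cancel f g).symm⟩
  · obtain ⟨K, hK⟩ := hD.cocyclePrimitive.locallyLipschitzOn.exists_lipschitzOnWith_of_compact hΩ
    exact ⟨K, K.2, fun x hx y hy => by simpa only [Real.dist_eq] using hK.dist_le_mul x hx y hy⟩
  · simpa only [doubleDiff, sub_sub, Pi.zero_apply, sub_eq_zero] using congrFun hA (x, y)
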